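/- arXiv:1301.4626 — 2 statements merged into one kernel-verified Lean document; each statement's English description precedes it below -/
import Mathlib

section
/- The pointwise product of two positive definite kernels on a set Ω is positive definite. -/
open ComplexConjugate
open scoped ComplexOrder

def PosDefKernel {Ω : Type*} (K : Ω → Ω → ℂ) : Prop :=
  ∀ (M : ℕ) (w : Fin M → Ω) (c : Fin M → ℂ),
    0 ≤ ∑ l, ∑ k, conj (c l) * K (w l) (w k) * c k

/-!
The Gram matrix of the product kernel at points `w₁, …, w_M` is the Hadamard product of the
Gram matrices of the factors, so the theorem is the Schur product theorem for positive
semidefinite matrices. Over `ℂ` (unlike `ℝ`) a nonnegative quadratic form already forces its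
matrix to be Hermitian, by polarization, so a kernel is positive definite exactly when all of
its Gram matrices are positive semidefinite.
-/

open Matrix

theorem Matrix.posSemidef_iff_forall_star_dotProduct_mulVec_nonneg {n : Type*} [Fintype n]
    {A : Matrix n n ℂ} : A.PosSemidef ↔ ∀ x, 0 ≤ star x ⬝ᵥ (A *ᵥ x) := by
  classical
  refine ⟨fun hA => hA.dotProduct_mulVec_nonneg, fun hA => .of_dotProduct_mulVec_nonneg ?_ hA⟩
  rw [← isSymmetric_toEuclideanLin_iff, LinearMap.isSymmetric_iff_inner_map_self_real]
  intro x
  rw [EuclideanSpace.inner_eq_star_dotProduct, dotProduct_star, dotProduct_comm, starRingEnd_apply]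
  exact congrArg star (hA x.ofLp).isSelfAdjoint

def kernelMatrix {Ω ι : Type*} (K : Ω → Ω → ℂ) (w : ι → Ω) : Matrix ι ι ℂ :=
  Matrix.of fun l k => K (w l) (w k)

theorem star_dotProduct_kernelMatrix_mulVec {Ω ι : Type*} [Fintype ι] (K : Ω → Ω → ℂ)
    (w : ι → Ω) (c : ι → ℂ) :
    star c ⬝ᵥ (kernelMatrix K w *ᵥ c) = ∑ l, ∑ k, conj (c l) * K (w l) (w k) * c k := by
  simp [dotProduct, mulVec, kernelMatrix, Finset.mul_sum, mul_assoc]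

theorem posDefKernel_iff_forall_posSemidef {Ω : Type*} {K : Ω → Ω → ℂ} :
    PosDefKernel K ↔ ∀ (M : ℕ) (w : Fin M → Ω), (kernelMatrix K w).PosSemidef := by
  simp only [posSemidef_iff_forall_star_dotProduct_mulVec_nonneg,
    star_dotProduct_kernelMatrix_mulVec, PosDefKernel]

/-- Schur product theorem, kernel form. -/
theorem stmt_4 {Ω : Type*} (K₁ K₂ : Ω → Ω → ℂ)
    (h₁ : PosDefKernel K₁) (h₂ : PosDefKernel K₂) :
    PosDefKernel (fun z w => K₁ z w * K₂ z w) := by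
  rw [posDefKernel_iff_forall_posSemidef] at *
  exact fun M w => (h₁ M w).hadamard (h₂ M w)
end

section
/- Let Ω ⊆ ℂ with R(z) = z⁴ − 2z² satisfying ∑_n |R_n(z)|² < ∞ for z ∈ Ω, and K(z,w) = ∏_{n≥0}(1 + R_n(z)·conj(R_n(w))). Then K converges on Ω × Ω, is positive definite, and K(z,w) = (1 + z·conj(w))·K(R(z), R(w)). -/
open ComplexConjugate
open scoped ComplexOrder

open Filter Finset
open scoped Topology

lemma summable_norm_mul_conj_of_summable_sq {ι : Type*} {f g : ι → ℂ}
    (hf : Summable fun n => ‖f n‖ ^ 2) (hg : Summable fun n => ‖g n‖ ^ 2) :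
    Summable fun n => ‖f n * conj (g n)‖ := by
  refine Summable.of_nonneg_of_le (fun n => norm_nonneg _) (fun n => ?_) (hf.add hg)
  rw [norm_mul, Complex.norm_conj]
  nlinarith [two_mul_le_add_sq ‖f n‖ ‖g n‖, norm_nonneg (f n), norm_nonneg (g n)]

namespace PosDefKernel

variable {α : Type*}

lemma one : PosDefKernel (fun _ _ : α => (1 : ℂ)) := by
  intro M w c
  have hsq : ∑ i, ∑ j, conj (c i) * 1 * c j = star (∑ i, c i) * ∑ j, c j := by
    simp only [mul_one, star_sum, sum_mul_sum, Complex.star_def]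
  rw [hsq]
  exact star_mul_self_nonneg _

/-- Multiplying by `1 + f z f̄(w)` adds to the Gram form of `K` its value at the coefficients
`f̄(w k) c k`. -/
lemma mul_one_add_mul_conj {K : α → α → ℂ} (hK : PosDefKernel K) (f : α → ℂ) :
    PosDefKernel (fun z w => K z w * (1 + f z * conj (f w))) := by
  intro M w c
  have hsplit : ∑ i, ∑ j, conj (c i) * (K (w i) (w j) * (1 + f (w i) * conj (f (w j)))) * c j
      = (∑ i, ∑ j, conj (c i) * K (w i) (w j) * c j)
        + ∑ i, ∑ j, conj (conj (f (w i)) * c i) * K (w i) (w j) * (conj (f (w j)) * c j) := by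
    rw [← sum_add_distrib]
    refine sum_congr rfl fun i _ => ?_
    rw [← sum_add_distrib]
    refine sum_congr rfl fun j _ => ?_
    simp only [map_mul, Complex.conj_conj]
    ring
  rw [hsplit]
  exact add_nonneg (hK M w c) (hK M w _)

lemma of_tendsto {ι : Type*} {l : Filter ι} [l.NeBot] {F : ι → α → α → ℂ} {K : α → α → ℂ}
    (hF : ∀ i, PosDefKernel (F i)) (hlim : ∀ z w, Tendsto (fun i => F i z w) l (𝓝 (K z w))) :
    PosDefKernel K := by
  intro M w c
  exact ge_of_tendsto' (tendsto_finsetSum _ fun i _ => tendsto_finsetSum _ fun j _ =>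
    ((hlim _ _).const_mul _).mul_const _) fun i => hF i M w c

lemma prod_range_one_add_mul_conj (f : ℕ → α → ℂ) (N : ℕ) :
    PosDefKernel (fun z w => ∏ n ∈ range N, (1 + f n z * conj (f n w))) := by
  induction N with
  | zero => simpa using one
  | succ N ih => simpa only [prod_range_succ] using ih.mul_one_add_mul_conj (f N)

lemma tprod_one_add_mul_conj {f : ℕ → α → ℂ}
    (hf : ∀ z w, Multipliable fun n => 1 + f n z * conj (f n w)) :
    PosDefKernel (fun z w => ∏' n, (1 + f n z * conj (f n w))) :=
  of_tendsto (prod_range_one_add_mul_conj f) fun z w => (hf z w).hasProd.tendsto_prod_nat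

end PosDefKernel

lemma tprod_one_add_mul_conj_iterate {R : ℂ → ℂ} {z w : ℂ}
    (h : Multipliable fun n : ℕ => 1 + R^[n] (R z) * conj (R^[n] (R w))) :
    ∏' n : ℕ, (1 + R^[n] z * conj (R^[n] w))
      = (1 + z * conj w) * ∏' n : ℕ, (1 + R^[n] (R z) * conj (R^[n] (R w))) := by
  simp only [← Function.iterate_succ_apply] at h ⊢
  exact tprod_eq_zero_mul' h

theorem stmt_10_general (R : ℂ → ℂ)
    (Ω : Set ℂ) (hΩ : ∀ z ∈ Ω, Summable fun n : ℕ => ‖R^[n] z‖ ^ 2)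
    (hRΩ : Set.MapsTo R Ω Ω)
    (K : ℂ → ℂ → ℂ)
    (hK : ∀ z w : ℂ, K z w = ∏' n : ℕ, (1 + R^[n] z * conj (R^[n] w))) :
    (∀ z ∈ Ω, ∀ w ∈ Ω,
      (Multipliable fun n : ℕ => 1 + R^[n] z * conj (R^[n] w)) ∧
      K z w = (1 + z * conj w) * K (R z) (R w)) ∧
    PosDefKernel (fun z w : Ω => K z w) := by
  have hmult : ∀ z ∈ Ω, ∀ w ∈ Ω, Multipliable fun n : ℕ => 1 + R^[n] z * conj (R^[n] w) :=
    fun z hz w hw => multipliable_one_add_of_summable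
      (summable_norm_mul_conj_of_summable_sq (hΩ z hz) (hΩ w hw))
  refine ⟨fun z hz w hw => ⟨hmult z hz w hw, ?_⟩, ?_⟩
  · rw [hK, hK]
    exact tprod_one_add_mul_conj_iterate (hmult _ (hRΩ hz) _ (hRΩ hw))
  · simp only [hK]
    exact PosDefKernel.tprod_one_add_mul_conj (f := fun n (z : Ω) => R^[n] z)
      fun z w => hmult z z.2 w w.2

theorem stmt_10 (R : ℂ → ℂ) (hR : ∀ z, R z = z ^ 4 - 2 * z ^ 2)
    (Ω : Set ℂ) (hΩ : ∀ z ∈ Ω, Summable fun n : ℕ => ‖R^[n] z‖ ^ 2)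
    (hRΩ : Set.MapsTo R Ω Ω)
    (K : ℂ → ℂ → ℂ)
    (hK : ∀ z w : ℂ, K z w = ∏' n : ℕ, (1 + R^[n] z * conj (R^[n] w))) :
    (∀ z ∈ Ω, ∀ w ∈ Ω,
      (Multipliable fun n : ℕ => 1 + R^[n] z * conj (R^[n] w)) ∧
      K z w = (1 + z * conj w) * K (R z) (R w)) ∧
    PosDefKernel (fun z w : Ω => K z w) :=
  stmt_10_general R Ω hΩ hRΩ K hK
end
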